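/- arXiv:1711.07222 — 3 statements merged into one kernel-verified Lean document; each statement's English description precedes it below -/
import Mathlib

section
/- Suppose V̂ ≤ V* pointwise, V* = TV*, and (x₀,…,x_T) is a feasible trajectory with V̂(x_T) = V*(x_T). Then with ε(x) := T V̂(x) − V̂(x) and θ(x,y) the forcing cost defined as in Lemma 5, V̂(x₀) ≤ V*(x₀) ≤ V̂(x₀) + Σ_{τ=0}^{T−1} γ^τ ( θ(x_τ, x_{τ+1}) + ε(x_τ) ). -/
lemma aux9 {X U : Type*} (f : X → U → X) (Uadm : X → Set U)
    (ℓ : X → U → ℝ) (γ : ℝ) (hγ : 0 ≤ γ)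
    (Vstar : X → ℝ)
    (hVstar : ∀ z, IsLeast {c | ∃ u ∈ Uadm z, c = ℓ z u + γ * Vstar (f z u)} (Vstar z))
    (T : ℕ) (xs : ℕ → X) (u : ℕ → U)
    (hu : ∀ τ < T, u τ ∈ Uadm (xs τ) ∧ f (xs τ) (u τ) = xs (τ + 1)) :
    Vstar (xs 0) ≤ (∑ τ ∈ Finset.range T, γ ^ τ * ℓ (xs τ) (u τ)) + γ ^ T * Vstar (xs T) := by
  induction T with
  | zero => simp
  | succ n ih =>
    have hstep : Vstar (xs n) ≤ ℓ (xs n) (u n) + γ * Vstar (xs (n + 1)) := by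
      obtain ⟨hadm, hf⟩ := hu n (Nat.lt_succ_self n)
      have := (hVstar (xs n)).2 ⟨u n, hadm, rfl⟩
      rwa [hf] at this
    have ihn := ih (fun τ hτ => hu τ (hτ.trans (Nat.lt_succ_self n)))
    calc Vstar (xs 0) ≤ (∑ τ ∈ Finset.range n, γ ^ τ * ℓ (xs τ) (u τ)) + γ ^ n * Vstar (xs n) := ihn
      _ ≤ (∑ τ ∈ Finset.range n, γ ^ τ * ℓ (xs τ) (u τ)) +
          γ ^ n * (ℓ (xs n) (u n) + γ * Vstar (xs (n + 1))) := by
          have : (0:ℝ) ≤ γ ^ n := pow_nonneg hγ n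
          nlinarith [hstep]
      _ = (∑ τ ∈ Finset.range (n + 1), γ ^ τ * ℓ (xs τ) (u τ)) + γ ^ (n + 1) * Vstar (xs (n + 1)) := by
          rw [Finset.sum_range_succ]; ring

/-- Corollary 1: telescoped suboptimality bound along a feasible
trajectory `(x₀,…,x_T)` ending at a state where `V̂ = V*`:
`V̂(x₀) ≤ V*(x₀) ≤ V̂(x₀) + Σ_{τ<T} γ^τ (θ(x_τ,x_{τ+1}) + ε(x_τ))`,
where `θ(x,y) = ℓ(x,u_{x→y}) + γ V̂(y) − T V̂(x)` and `ε(x) = T V̂(x) − V̂(x)`. -/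
theorem stmt9 {X U : Type*} (f : X → U → X) (Uadm : X → Set U)
    (ℓ : X → U → ℝ) (γ : ℝ) (hγ0 : 0 < γ) (hγ1 : γ ≤ 1)
    (Vhat Vstar Tval : X → ℝ)
    (hle : ∀ z, Vhat z ≤ Vstar z)
    (hVstar : ∀ z, IsLeast {c | ∃ u ∈ Uadm z, c = ℓ z u + γ * Vstar (f z u)} (Vstar z))
    (hT : ∀ z, IsLeast {c | ∃ u ∈ Uadm z, c = ℓ z u + γ * Vhat (f z u)} (Tval z))
    (T : ℕ) (xs : ℕ → X) (u : ℕ → U)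
    (hu : ∀ τ < T, u τ ∈ Uadm (xs τ) ∧ f (xs τ) (u τ) = xs (τ + 1))
    (humin : ∀ τ < T, ∀ u' ∈ Uadm (xs τ), f (xs τ) u' = xs (τ + 1) →
      ℓ (xs τ) (u τ) ≤ ℓ (xs τ) u')
    (hend : Vhat (xs T) = Vstar (xs T)) :
    Vhat (xs 0) ≤ Vstar (xs 0) ∧
    Vstar (xs 0) ≤ Vhat (xs 0) + ∑ τ ∈ Finset.range T, γ ^ τ *
      ((ℓ (xs τ) (u τ) + γ * Vhat (xs (τ + 1)) - Tval (xs τ)) +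
        (Tval (xs τ) - Vhat (xs τ))) := by
  refine ⟨hle _, ?_⟩
  have hmain := aux9 f Uadm ℓ γ hγ0.le Vstar hVstar T xs u hu
  have htel : ∑ τ ∈ Finset.range T, (γ ^ (τ + 1) * Vhat (xs (τ + 1)) - γ ^ τ * Vhat (xs τ))
      = γ ^ T * Vhat (xs T) - γ ^ 0 * Vhat (xs 0) :=
    Finset.sum_range_sub (fun τ => γ ^ τ * Vhat (xs τ)) T
  have hsum : Vhat (xs 0) + ∑ τ ∈ Finset.range T, γ ^ τ *
      ((ℓ (xs τ) (u τ) + γ * Vhat (xs (τ + 1)) - Tval (xs τ)) + (Tval (xs τ) - Vhat (xs τ)))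
      = (∑ τ ∈ Finset.range T, γ ^ τ * ℓ (xs τ) (u τ)) + γ ^ T * Vhat (xs T) := by
    have : ∀ τ ∈ Finset.range T, γ ^ τ *
        ((ℓ (xs τ) (u τ) + γ * Vhat (xs (τ + 1)) - Tval (xs τ)) + (Tval (xs τ) - Vhat (xs τ)))
        = γ ^ τ * ℓ (xs τ) (u τ) + (γ ^ (τ + 1) * Vhat (xs (τ + 1)) - γ ^ τ * Vhat (xs τ)) := by
      intro τ _; ring
    rw [Finset.sum_congr rfl this, Finset.sum_add_distrib, htel]
    ring
  rw [hsum, hend]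
  exact hmain
end

section
/- State-independence of the dual feasible set: under Restriction 2 (either all R_j ≻ 0, or F_u(x) ≡ B constant), if (ν̂*, λ̂_c*, λ̂_β*, λ̂_α*) is dual-optimal for the one-stage problem with parameter x̂, then for every other parameter x̄ the same multipliers are dual-feasible, and hence the function g(x) := φ(x)ᵀλ̂_β* − h(x)ᵀλ̂_c* + f_x(x)ᵀν̂* + ζ₁(ν̂*,λ̂_α*) + ζ₂(x,ν̂*,λ̂_c*,λ̂_β*) satisfies g(x̄) ≤ J_D(x̄) ≤ J_P(x̄) for all x̄ ∈ X. -/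
/-!
Of the dual feasibility conditions only the lower bound on `ζ₂` involves the parameter `x`,
through `F_u(x)`. Under Restriction 2 it holds at every `x`: either `F_u` is constant, or every
`R_j ≻ 0` and, since each group of multipliers `λ_β` sums to one, some `λ_{β,j} > 0`, so the
Lagrangian in `u` is a positive definite quadratic plus a linear term, bounded below by completing
the square. The multipliers are thus dual-feasible at every `x̄`, and weak duality (evaluate both
infima at a primal-feasible point and use nonnegativity of the multipliers) bounds `g(x̄)` by every
primal value.
-/

open Matrix

/-- The dual objective of the parametric one-stage problem:
`φ(x)ᵀlamb − h(x)ᵀlamc + f_x(x)ᵀν + ζ₁(ν,lama) + ζ₂(x,ν,lamc,lamb)`, where `ζ₁` and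
`ζ₂` are the infima of the Lagrangian over the successor state `x₊` and the
input `u ∈ U` respectively. -/
noncomputable def dualObj {n m nc Jn Ic : ℕ} (Uset : Set (Fin m → ℝ))
    (fx : (Fin n → ℝ) → Fin n → ℝ) (Fu : (Fin n → ℝ) → Matrix (Fin n) (Fin m) ℝ)
    (E : Matrix (Fin nc) (Fin m) ℝ) (hb : (Fin n → ℝ) → Fin nc → ℝ)
    (φ : Fin Jn → (Fin n → ℝ) → ℝ) (r : Fin Jn → Fin m → ℝ)
    (R : Fin Jn → Matrix (Fin m) (Fin m) ℝ) (g : Fin Ic → (Fin n → ℝ) → ℝ)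
    (x ν : Fin n → ℝ) (lamc : Fin nc → ℝ) (lamb : Fin Jn → ℝ) (lama : Fin Ic → ℝ) : ℝ :=
  (∑ j, lamb j * φ j x) - (lamc ⬝ᵥ hb x) + (ν ⬝ᵥ fx x)
  + sInf {v : ℝ | ∃ xp : Fin n → ℝ, v = -(ν ⬝ᵥ xp) + ∑ i, lama i * g i xp}
  + sInf {v : ℝ | ∃ u ∈ Uset, v =
      (ν ⬝ᵥ (Fu x).mulVec u + lamc ⬝ᵥ E.mulVec u + ∑ j, lamb j * (r j ⬝ᵥ u))
      + (1 / 2) * (u ⬝ᵥ (∑ j, lamb j • R j).mulVec u)}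

/-- Dual feasibility for the one-stage problem with parameter `x`: the explicit
constraints `Lᵀlamb = 1`, `1ᵀlama = γ`, nonnegativity, together with the implicit
constraints that the Lagrangian infima `ζ₁` and `ζ₂` be bounded below. -/
def dualFeas {n m nc Jn Ic K : ℕ} (Uset : Set (Fin m → ℝ))
    (Fu : (Fin n → ℝ) → Matrix (Fin n) (Fin m) ℝ)
    (E : Matrix (Fin nc) (Fin m) ℝ)
    (r : Fin Jn → Fin m → ℝ) (R : Fin Jn → Matrix (Fin m) (Fin m) ℝ)
    (g : Fin Ic → (Fin n → ℝ) → ℝ) (γ : ℝ) (kof : Fin Jn → Fin K)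
    (x ν : Fin n → ℝ) (lamc : Fin nc → ℝ) (lamb : Fin Jn → ℝ) (lama : Fin Ic → ℝ) : Prop :=
  (∀ k, ∑ j ∈ Finset.univ.filter (fun j => kof j = k), lamb j = 1) ∧
  (∑ i, lama i = γ) ∧
  (∀ c, 0 ≤ lamc c) ∧ (∀ j, 0 ≤ lamb j) ∧ (∀ i, 0 ≤ lama i) ∧
  BddBelow {v : ℝ | ∃ xp : Fin n → ℝ, v = -(ν ⬝ᵥ xp) + ∑ i, lama i * g i xp} ∧
  BddBelow {v : ℝ | ∃ u ∈ Uset, v =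
      (ν ⬝ᵥ (Fu x).mulVec u + lamc ⬝ᵥ E.mulVec u + ∑ j, lamb j * (r j ⬝ᵥ u))
      + (1 / 2) * (u ⬝ᵥ (∑ j, lamb j • R j).mulVec u)}

/-- The set of primal objective values of the one-stage problem with
parameter `x` (epigraph form, successor state eliminated). -/
def primalSet {n m nc Jn Ic K : ℕ} (Uset : Set (Fin m → ℝ))
    (fx : (Fin n → ℝ) → Fin n → ℝ) (Fu : (Fin n → ℝ) → Matrix (Fin n) (Fin m) ℝ)
    (E : Matrix (Fin nc) (Fin m) ℝ) (hb : (Fin n → ℝ) → Fin nc → ℝ)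
    (φ : Fin Jn → (Fin n → ℝ) → ℝ) (r : Fin Jn → Fin m → ℝ)
    (R : Fin Jn → Matrix (Fin m) (Fin m) ℝ) (g : Fin Ic → (Fin n → ℝ) → ℝ)
    (γ : ℝ) (kof : Fin Jn → Fin K) (x : Fin n → ℝ) : Set ℝ :=
  {c : ℝ | ∃ u ∈ Uset, ∃ β : Fin K → ℝ, ∃ α : ℝ,
    (∀ cc, E.mulVec u cc ≤ hb x cc) ∧
    (∀ j, φ j x + r j ⬝ᵥ u + (1 / 2) * (u ⬝ᵥ (R j).mulVec u) ≤ β (kof j)) ∧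
    (∀ i, g i (fx x + (Fu x).mulVec u) ≤ α) ∧
    c = (∑ k, β k) + γ * α}

namespace Matrix

variable {ι n : Type*} [Fintype ι]

theorem posDef_sum_smul [DecidableEq ι] {A : ι → Matrix n n ℝ} (hA : ∀ j, (A j).PosDef)
    {w : ι → ℝ} (hw : ∀ j, 0 ≤ w j) {j₀ : ι} (hj₀ : 0 < w j₀) : (∑ j, w j • A j).PosDef := by
  rw [← Finset.add_sum_erase _ _ (Finset.mem_univ j₀)]
  exact ((hA j₀).smul hj₀).add_posSemidef
    (posSemidef_sum _ fun j _ => (hA j).posSemidef.smul (hw j))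

variable [Fintype n]

theorem dotProduct_sum_smul_mulVec (c : ι → ℝ) (A : ι → Matrix n n ℝ) (x y : n → ℝ) :
    x ⬝ᵥ (∑ j, c j • A j) *ᵥ y = ∑ j, c j * (x ⬝ᵥ A j *ᵥ y) := by
  simp only [sum_mulVec, dotProduct_sum, smul_mulVec, dotProduct_smul, smul_eq_mul]

theorem PosDef.neg_half_dotProduct_inv_mulVec_le [DecidableEq n] {M : Matrix n n ℝ}
    (hM : M.PosDef) (a u : n → ℝ) :
    -(1 / 2) * (a ⬝ᵥ M⁻¹ *ᵥ a) ≤ a ⬝ᵥ u + (1 / 2) * (u ⬝ᵥ M *ᵥ u) := by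
  set w := M⁻¹ *ᵥ a
  have hMw : M *ᵥ w = a := by
    rw [mulVec_mulVec, mul_nonsing_inv _ ((isUnit_iff_isUnit_det M).1 hM.isUnit), one_mulVec]
  have hsymm (v : n → ℝ) : w ⬝ᵥ M *ᵥ v = a ⬝ᵥ v := by
    rw [dotProduct_mulVec, ← mulVec_transpose, isHermitian_iff_isSymm.1 hM.isHermitian, hMw]
  have hsq : 0 ≤ (u + w) ⬝ᵥ M *ᵥ (u + w) := by
    simpa using hM.posSemidef.dotProduct_mulVec_nonneg (u + w)
  rw [mulVec_add, dotProduct_add, add_dotProduct, add_dotProduct, hMw, hsymm,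
    dotProduct_comm u a, dotProduct_comm w a] at hsq
  linarith

theorem PosDef.bddBelow_image_dotProduct_add_half_quadratic [DecidableEq n] {M : Matrix n n ℝ}
    (hM : M.PosDef) (a : n → ℝ) (U : Set (n → ℝ)) :
    BddBelow ((fun u => a ⬝ᵥ u + (1 / 2) * (u ⬝ᵥ M *ᵥ u)) '' U) :=
  ⟨_, Set.forall_mem_image.2 fun u _ => hM.neg_half_dotProduct_inv_mulVec_le a u⟩

end Matrix

theorem Finset.sum_mul_le_sum_of_sum_fiberwise_eq_one {ι κ : Type*} [Fintype ι] [Fintype κ]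
    [DecidableEq κ] (f : ι → κ) {w a : ι → ℝ} {β : κ → ℝ} (hw : ∀ j, 0 ≤ w j)
    (hfib : ∀ k, ∑ j ∈ univ.filter (fun j => f j = k), w j = 1) (h : ∀ j, a j ≤ β (f j)) :
    ∑ j, w j * a j ≤ ∑ k, β k :=
  calc ∑ j, w j * a j ≤ ∑ j, w j * β (f j) :=
        sum_le_sum fun j _ => mul_le_mul_of_nonneg_left (h j) (hw j)
    _ = ∑ k, ∑ j ∈ univ.filter (fun j => f j = k), w j * β (f j) := (sum_fiberwise _ f _).symm
    _ = ∑ k, β k := sum_congr rfl fun k _ => by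
        rw [sum_congr rfl fun j hj => by rw [(mem_filter.1 hj).2], ← sum_mul, hfib, one_mul]

section OneStageProblem

variable {n m nc Jn Ic K : ℕ} {Uset : Set (Fin m → ℝ)}
    {fx : (Fin n → ℝ) → Fin n → ℝ} {Fu : (Fin n → ℝ) → Matrix (Fin n) (Fin m) ℝ}
    {E : Matrix (Fin nc) (Fin m) ℝ} {hb : (Fin n → ℝ) → Fin nc → ℝ}
    {φ : Fin Jn → (Fin n → ℝ) → ℝ} {r : Fin Jn → Fin m → ℝ}
    {R : Fin Jn → Matrix (Fin m) (Fin m) ℝ} {g : Fin Ic → (Fin n → ℝ) → ℝ}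
    {γ : ℝ} {kof : Fin Jn → Fin K}
    {ν : Fin n → ℝ} {lamc : Fin nc → ℝ} {lamb : Fin Jn → ℝ} {lama : Fin Ic → ℝ}

theorem dualObj_mem_lowerBounds_primalSet {x : Fin n → ℝ}
    (hfeas : dualFeas Uset Fu E r R g γ kof x ν lamc lamb lama) :
    dualObj Uset fx Fu E hb φ r R g x ν lamc lamb lama ∈
      lowerBounds (primalSet Uset fx Fu E hb φ r R g γ kof x) := by
  obtain ⟨hfib, hγ, hc0, hb0, ha0, hζ₁, hζ₂⟩ := hfeas
  rintro _ ⟨u, hu, β, α, hEu, hβ, hα, rfl⟩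
  set xp := fx x + Fu x *ᵥ u
  have hζ₁_le := csInf_le hζ₁ ⟨xp, rfl⟩
  have hζ₂_le := csInf_le hζ₂ ⟨u, hu, rfl⟩
  have hcost := Finset.sum_mul_le_sum_of_sum_fiberwise_eq_one kof hb0 hfib hβ
  have hterm : ∑ i, lama i * g i xp ≤ γ * α := by
    calc ∑ i, lama i * g i xp ≤ ∑ i, lama i * α :=
          Finset.sum_le_sum fun i _ => mul_le_mul_of_nonneg_left (hα i) (ha0 i)
      _ = γ * α := by rw [← Finset.sum_mul, hγ]
  have hcons : lamc ⬝ᵥ E *ᵥ u ≤ lamc ⬝ᵥ hb x :=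
    dotProduct_le_dotProduct_of_nonneg_left hEu hc0
  have hsplit : ∑ j, lamb j * (φ j x + r j ⬝ᵥ u + (1 / 2) * (u ⬝ᵥ R j *ᵥ u)) =
      ∑ j, lamb j * φ j x + ∑ j, lamb j * (r j ⬝ᵥ u)
        + (1 / 2) * (u ⬝ᵥ (∑ j, lamb j • R j) *ᵥ u) := by
    simp only [dotProduct_sum_smul_mulVec, Finset.mul_sum, ← Finset.sum_add_distrib]
    exact Finset.sum_congr rfl fun j _ => by ring
  have hxp : ν ⬝ᵥ xp = ν ⬝ᵥ fx x + ν ⬝ᵥ Fu x *ᵥ u := dotProduct_add _ _ _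
  unfold dualObj
  linarith

theorem dualFeas_of_restriction (hK : 0 < K) (hres : (∀ j, (R j).PosDef) ∨ (∃ B, ∀ x, Fu x = B))
    {xhat : Fin n → ℝ} (hfeas : dualFeas Uset Fu E r R g γ kof xhat ν lamc lamb lama)
    (xbar : Fin n → ℝ) : dualFeas Uset Fu E r R g γ kof xbar ν lamc lamb lama := by
  obtain ⟨hfib, hγ, hc0, hb0, ha0, hζ₁, hζ₂⟩ := hfeas
  refine ⟨hfib, hγ, hc0, hb0, ha0, hζ₁, ?_⟩
  rcases hres with hR | ⟨B, hB⟩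
  · obtain ⟨j₀, -, hj₀⟩ := Finset.exists_ne_zero_of_sum_ne_zero
        ((hfib ⟨0, hK⟩).trans_ne one_ne_zero)
    have hM := posDef_sum_smul hR hb0 ((hb0 j₀).lt_of_ne' hj₀)
    refine (hM.bddBelow_image_dotProduct_add_half_quadratic
      (ν ᵥ* Fu xbar + lamc ᵥ* E + ∑ j, lamb j • r j) Uset).mono ?_
    rintro _ ⟨u, hu, rfl⟩
    refine ⟨u, hu, ?_⟩
    simp only [add_dotProduct, sum_dotProduct, smul_dotProduct, smul_eq_mul,
      dotProduct_mulVec, dotProduct_comm (r _) u]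
  · rwa [hB xbar, ← hB xhat]

end OneStageProblem

theorem stmt13_general {n m nc Jn Ic K : ℕ} (hK : 0 < K) (Uset : Set (Fin m → ℝ))
    (fx : (Fin n → ℝ) → Fin n → ℝ) (Fu : (Fin n → ℝ) → Matrix (Fin n) (Fin m) ℝ)
    (E : Matrix (Fin nc) (Fin m) ℝ) (hb : (Fin n → ℝ) → Fin nc → ℝ)
    (φ : Fin Jn → (Fin n → ℝ) → ℝ) (r : Fin Jn → Fin m → ℝ)
    (R : Fin Jn → Matrix (Fin m) (Fin m) ℝ) (g : Fin Ic → (Fin n → ℝ) → ℝ)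
    (γ : ℝ) (kof : Fin Jn → Fin K)
    (hres : (∀ j, (R j).PosDef) ∨ (∃ B, ∀ x, Fu x = B))
    (xhat ν : Fin n → ℝ) (lamc : Fin nc → ℝ) (lamb : Fin Jn → ℝ) (lama : Fin Ic → ℝ)
    (hfeas : dualFeas Uset Fu E r R g γ kof xhat ν lamc lamb lama) :
    ∀ xbar : Fin n → ℝ,
      dualFeas Uset Fu E r R g γ kof xbar ν lamc lamb lama ∧
      dualObj Uset fx Fu E hb φ r R g xbar ν lamc lamb lama ∈
        lowerBounds (primalSet Uset fx Fu E hb φ r R g γ kof xbar) := fun xbar =>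
  have hfeas' := dualFeas_of_restriction hK hres hfeas xbar
  ⟨hfeas', dualObj_mem_lowerBounds_primalSet hfeas'⟩

/-- state-independence of the dual feasible set under
Restriction 2 (all `R_j ≻ 0`, or `F_u(x) ≡ B` constant): if the multipliers
`(ν̂*, λ̂c*, λ̂β*, λ̂α*)` are dual-optimal for the one-stage problem with
parameter `x̂`, then for every other parameter `x̄` they remain dual-feasible,
and the function `g(x) = φ(x)ᵀλ̂β* − h(x)ᵀλ̂c* + f_x(x)ᵀν̂* + ζ₁ + ζ₂(x)`
satisfies `g(x̄) ≤ J_D(x̄) ≤ J_P(x̄)` (here expressed as: `g(x̄)` is a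
dual-feasible objective value, hence at most the dual optimum, and it lower
bounds every primal objective value). -/
theorem stmt13 {n m nc Jn Ic K : ℕ} (hK : 0 < K) (Uset : Set (Fin m → ℝ))
    (fx : (Fin n → ℝ) → Fin n → ℝ) (Fu : (Fin n → ℝ) → Matrix (Fin n) (Fin m) ℝ)
    (E : Matrix (Fin nc) (Fin m) ℝ) (hb : (Fin n → ℝ) → Fin nc → ℝ)
    (φ : Fin Jn → (Fin n → ℝ) → ℝ) (r : Fin Jn → Fin m → ℝ)
    (R : Fin Jn → Matrix (Fin m) (Fin m) ℝ) (g : Fin Ic → (Fin n → ℝ) → ℝ)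
    (γ : ℝ) (hγ0 : 0 < γ) (hγ1 : γ ≤ 1) (kof : Fin Jn → Fin K)
    (hres : (∀ j, (R j).PosDef) ∨ (∃ B, ∀ x, Fu x = B))
    (xhat ν : Fin n → ℝ) (lamc : Fin nc → ℝ) (lamb : Fin Jn → ℝ) (lama : Fin Ic → ℝ)
    (hfeas : dualFeas Uset Fu E r R g γ kof xhat ν lamc lamb lama)
    (hopt : dualObj Uset fx Fu E hb φ r R g xhat ν lamc lamb lama ∈
      upperBounds {c : ℝ | ∃ ν' lamc' lamb' lama',
        dualFeas Uset Fu E r R g γ kof xhat ν' lamc' lamb' lama' ∧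
        c = dualObj Uset fx Fu E hb φ r R g xhat ν' lamc' lamb' lama'}) :
    ∀ xbar : Fin n → ℝ,
      dualFeas Uset Fu E r R g γ kof xbar ν lamc lamb lama ∧
      dualObj Uset fx Fu E hb φ r R g xbar ν lamc lamb lama ∈
        lowerBounds (primalSet Uset fx Fu E hb φ r R g γ kof xbar) :=
  stmt13_general hK Uset fx Fu E hb φ r R g γ kof hres xhat ν lamc lamb lama hfeas
end

section
/- Lower-bounding lemma (Lemma 3): if g_i(x) ≤ V*(x) for all x and i = 0,…,I, and optimal dual variables (ν̂*, λ̂_c*, λ̂_β*, λ̂_α*) exist for the one-stage dual problem at parameter x̂, then the function g_{I+1}(x) := φ(x)ᵀλ̂_β* − h(x)ᵀλ̂_c* + f_x(x)ᵀν̂* + ζ₁(ν̂*,λ̂_α*) + ζ₂(x,ν̂*,λ̂_c*,λ̂_β*) satisfies g_{I+1}(x) ≤ V*(x) for all x ∈ X. -/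
open Matrix

/-! Weak duality: a dual-feasible point at `x` bounds every value of `primalSet x` from below.
That set contains the Bellman cost of every admissible input with cost-to-go `V*` (take `β k`
the maximum over the fibre `kof⁻¹ k` and `α = V*(x₊)`, admissible because every `gᵢ ≤ V*`), so
the dual objective lies below their infimum `T V*(x) = V*(x)`. The dual variables optimal at
`x̂` are feasible at every `x`: the only state-dependent clause, boundedness below of the input
Lagrangian, is state-free when `F_u` is constant, and automatic when every `R j` is positive
definite, because then so is `∑ j, lamb j • R j` (the fibre sums of `lamb` are `1`, so some
`lamb j > 0`) and a positive definite quadratic plus a linear form is bounded below. -/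

theorem Finset.sum_mul_apply_eq_sum_of_sum_fiber_eq_one {ι κ R : Type*} [Fintype ι]
    [Fintype κ] [DecidableEq κ] [CommSemiring R] {f : ι → κ} {w : ι → R}
    (hw : ∀ k, ∑ j ∈ Finset.univ.filter (fun j => f j = k), w j = 1) (β : κ → R) :
    ∑ j, w j * β (f j) = ∑ k, β k := by
  rw [← Finset.sum_fiberwise Finset.univ f]
  refine Finset.sum_congr rfl fun k _ => ?_
  rw [Finset.sum_congr rfl fun j hj => by rw [(Finset.mem_filter.mp hj).2], ← Finset.sum_mul,
    hw k, one_mul]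

theorem Matrix.dotProduct_sum_smul_mulVec_s14 {ι κ : Type*} [Fintype ι] [Fintype κ]
    (w : κ → ℝ) (A : κ → Matrix ι ι ℝ) (u : ι → ℝ) :
    u ⬝ᵥ (∑ j, w j • A j) *ᵥ u = ∑ j, w j * (u ⬝ᵥ A j *ᵥ u) := by
  simp only [sum_mulVec, dotProduct_sum, smul_mulVec, dotProduct_smul, smul_eq_mul]

theorem Matrix.posDef_sum_smul_s14 {ι κ : Type*} [Fintype ι] [Fintype κ] [DecidableEq κ]
    {w : κ → ℝ} {A : κ → Matrix ι ι ℝ} (hA : ∀ j, (A j).PosDef) (hw : ∀ j, 0 ≤ w j)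
    {j₀ : κ} (hj₀ : 0 < w j₀) : (∑ j, w j • A j).PosDef := by
  rw [← Finset.add_sum_erase _ _ (Finset.mem_univ j₀)]
  exact ((hA j₀).smul hj₀).add_posSemidef
    (posSemidef_sum _ fun j _ => (hA j).posSemidef.smul (hw j))

theorem Matrix.PosDef.neg_half_inv_dotProduct_le {ι : Type*} [Fintype ι] [DecidableEq ι]
    {M : Matrix ι ι ℝ} (hM : M.PosDef) (b u : ι → ℝ) :
    -(1 / 2) * (M⁻¹ *ᵥ b ⬝ᵥ b) ≤ b ⬝ᵥ u + (1 / 2) * (u ⬝ᵥ M *ᵥ u) := by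
  set w := M⁻¹ *ᵥ b
  have hMw : M *ᵥ w = b := by
    rw [mulVec_mulVec, mul_nonsing_inv _ ((isUnit_iff_isUnit_det M).mp hM.isUnit), one_mulVec]
  have hMt : Mᵀ = M := by
    rw [← conjTranspose_eq_transpose_of_trivial]
    exact hM.isHermitian.eq
  have hwu : w ⬝ᵥ M *ᵥ u = b ⬝ᵥ u := by
    rw [dotProduct_mulVec, ← mulVec_transpose, hMt, hMw]
  have hsq : 0 ≤ (u + w) ⬝ᵥ M *ᵥ (u + w) := hM.posSemidef.dotProduct_mulVec_nonneg _
  simp only [mulVec_add, dotProduct_add, add_dotProduct, hMw, hwu] at hsq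
  rw [dotProduct_comm u b] at hsq
  linarith [dotProduct_comm w b]

section OneStage

variable {n m nc Jn Ic K : ℕ} {Uset : Set (Fin m → ℝ)} {fx : (Fin n → ℝ) → Fin n → ℝ}
  {Fu : (Fin n → ℝ) → Matrix (Fin n) (Fin m) ℝ} {E : Matrix (Fin nc) (Fin m) ℝ}
  {hb : (Fin n → ℝ) → Fin nc → ℝ} {φ : Fin Jn → (Fin n → ℝ) → ℝ} {r : Fin Jn → Fin m → ℝ}
  {R : Fin Jn → Matrix (Fin m) (Fin m) ℝ} {g : Fin Ic → (Fin n → ℝ) → ℝ} {γ : ℝ}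
  {kof : Fin Jn → Fin K} {ν : Fin n → ℝ} {lamc : Fin nc → ℝ} {lamb : Fin Jn → ℝ}
  {lama : Fin Ic → ℝ}

theorem dualFeas_of_posDef_or_const (hK : 0 < K)
    (hres : (∀ j, (R j).PosDef) ∨ (∃ B, ∀ x, Fu x = B)) {xhat : Fin n → ℝ}
    (h : dualFeas Uset Fu E r R g γ kof xhat ν lamc lamb lama) (x : Fin n → ℝ) :
    dualFeas Uset Fu E r R g γ kof x ν lamc lamb lama := by
  obtain ⟨hsumb, hsuma, hlamc, hlamb, hlama, hbdd₁, hbdd₂⟩ := h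
  refine ⟨hsumb, hsuma, hlamc, hlamb, hlama, hbdd₁, ?_⟩
  rcases hres with hR | ⟨B, hB⟩
  · obtain ⟨j₀, -, hj₀⟩ : ∃ j ∈ Finset.univ.filter (fun j => kof j = ⟨0, hK⟩), 0 < lamb j :=
      Finset.exists_lt_of_sum_lt (by simp [hsumb])
    have hM := Matrix.posDef_sum_smul_s14 hR hlamb hj₀
    set b := ν ᵥ* Fu x + lamc ᵥ* E + ∑ j, lamb j • r j
    have hlin : ∀ u, ν ⬝ᵥ Fu x *ᵥ u + lamc ⬝ᵥ E *ᵥ u + ∑ j, lamb j * (r j ⬝ᵥ u) = b ⬝ᵥ u := by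
      intro u
      simp only [b, add_dotProduct, sum_dotProduct, smul_dotProduct, smul_eq_mul,
        dotProduct_mulVec]
    refine ⟨-(1 / 2) * ((∑ j, lamb j • R j)⁻¹ *ᵥ b ⬝ᵥ b), ?_⟩
    rintro _ ⟨u, -, rfl⟩
    rw [hlin]
    exact hM.neg_half_inv_dotProduct_le b u
  · simpa only [hB] using hbdd₂

theorem dualObj_le_of_mem_primalSet {x : Fin n → ℝ}
    (hfeas : dualFeas Uset Fu E r R g γ kof x ν lamc lamb lama) {c : ℝ}
    (hc : c ∈ primalSet Uset fx Fu E hb φ r R g γ kof x) :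
    dualObj Uset fx Fu E hb φ r R g x ν lamc lamb lama ≤ c := by
  obtain ⟨hsumb, hsuma, hlamc, hlamb, hlama, hbdd₁, hbdd₂⟩ := hfeas
  obtain ⟨u, hu, β, α, hEu, hβ, hα, rfl⟩ := hc
  set xp := fx x + Fu x *ᵥ u
  have hζ₁ := csInf_le hbdd₁ ⟨xp, rfl⟩
  have hζ₂ := csInf_le hbdd₂ ⟨u, hu, rfl⟩
  have hstage : ∑ j, lamb j * φ j x + ∑ j, lamb j * (r j ⬝ᵥ u)
      + (1 / 2) * (u ⬝ᵥ (∑ j, lamb j • R j) *ᵥ u) ≤ ∑ k, β k :=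
    calc _ = ∑ j, lamb j * (φ j x + r j ⬝ᵥ u + (1 / 2) * (u ⬝ᵥ R j *ᵥ u)) := by
          simp only [Matrix.dotProduct_sum_smul_mulVec_s14, Finset.mul_sum, mul_add,
            Finset.sum_add_distrib, mul_left_comm]
      _ ≤ ∑ j, lamb j * β (kof j) :=
          Finset.sum_le_sum fun j _ => mul_le_mul_of_nonneg_left (hβ j) (hlamb j)
      _ = ∑ k, β k := Finset.sum_mul_apply_eq_sum_of_sum_fiber_eq_one hsumb β
  have hcon : lamc ⬝ᵥ E *ᵥ u ≤ lamc ⬝ᵥ hb x :=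
    Finset.sum_le_sum fun cc _ => mul_le_mul_of_nonneg_left (hEu cc) (hlamc cc)
  have hnext : ∑ i, lama i * g i xp ≤ γ * α :=
    calc _ ≤ ∑ i, lama i * α :=
          Finset.sum_le_sum fun i _ => mul_le_mul_of_nonneg_left (hα i) (hlama i)
      _ = γ * α := by rw [← Finset.sum_mul, hsuma]
  have hsplit : ν ⬝ᵥ xp = ν ⬝ᵥ fx x + ν ⬝ᵥ Fu x *ᵥ u := dotProduct_add _ _ _
  unfold dualObj
  linarith

theorem bellmanCost_mem_primalSet {V : (Fin n → ℝ) → ℝ} (hlb : ∀ i z, g i z ≤ V z)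
    {x : Fin n → ℝ} {u : Fin m → ℝ} (hu : u ∈ Uset) (hEu : ∀ cc, (E *ᵥ u) cc ≤ hb x cc) :
    (∑ k, sSup {v : ℝ | ∃ j, kof j = k ∧
        v = φ j x + r j ⬝ᵥ u + (1 / 2) * (u ⬝ᵥ R j *ᵥ u)}) + γ * V (fx x + Fu x *ᵥ u)
      ∈ primalSet Uset fx Fu E hb φ r R g γ kof x := by
  refine ⟨u, hu, _, _, hEu, fun j => ?_, fun i => hlb i _, rfl⟩
  refine le_csSup ?_ ⟨j, rfl, rfl⟩
  refine ((Set.finite_range fun j => φ j x + r j ⬝ᵥ u + (1 / 2) * (u ⬝ᵥ R j *ᵥ u)).subset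
    ?_).bddAbove
  rintro _ ⟨j, -, rfl⟩
  exact ⟨j, rfl⟩

end OneStage

theorem stmt14_general {n m nc Jn Ic K : ℕ} (hK : 0 < K)
    (Uset : Set (Fin m → ℝ))
    (fx : (Fin n → ℝ) → Fin n → ℝ) (Fu : (Fin n → ℝ) → Matrix (Fin n) (Fin m) ℝ)
    (E : Matrix (Fin nc) (Fin m) ℝ) (hb : (Fin n → ℝ) → Fin nc → ℝ)
    (φ : Fin Jn → (Fin n → ℝ) → ℝ) (r : Fin Jn → Fin m → ℝ)
    (R : Fin Jn → Matrix (Fin m) (Fin m) ℝ) (g : Fin Ic → (Fin n → ℝ) → ℝ)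
    (γ : ℝ) (kof : Fin Jn → Fin K)
    (hres : (∀ j, (R j).PosDef) ∨ (∃ B, ∀ x, Fu x = B))
    (Vstar : (Fin n → ℝ) → ℝ)
    -- Bellman optimality condition `V* = T V*` for the problem whose stage
    -- cost is `ℓ(z,u) = Σ_k max_{j : kof j = k} {φ_j(z) + r_jᵀu + ½uᵀR_j u}`,
    -- dynamics `z₊ = f_x(z) + F_u(z)u`, and constraints `Eu ≤ h(z)`, `u ∈ U`:
    (hfix : ∀ z, Vstar z = sInf {c : ℝ | ∃ u ∈ Uset,
      (∀ cc, E.mulVec u cc ≤ hb z cc) ∧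
      c = (∑ k, sSup {v : ℝ | ∃ j, kof j = k ∧
            v = φ j z + r j ⬝ᵥ u + (1 / 2) * (u ⬝ᵥ (R j).mulVec u)}) +
          γ * Vstar (fx z + (Fu z).mulVec u)})
    -- the problem is feasible at every state:
    (hfeasible : ∀ z : Fin n → ℝ, ∃ u ∈ Uset, ∀ cc, E.mulVec u cc ≤ hb z cc)
    -- `g₀,…,g_I` are global lower bounds on `V*`:
    (hlb : ∀ i z, g i z ≤ Vstar z)
    (xhat ν : Fin n → ℝ) (lamc : Fin nc → ℝ) (lamb : Fin Jn → ℝ) (lama : Fin Ic → ℝ)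
    -- optimal dual variables exist for the one-stage dual problem at `x̂`:
    (hfeas : dualFeas Uset Fu E r R g γ kof xhat ν lamc lamb lama) :
    ∀ x : Fin n → ℝ, dualObj Uset fx Fu E hb φ r R g x ν lamc lamb lama ≤ Vstar x := by
  intro x
  rw [hfix x]
  obtain ⟨u₀, hu₀, hEu₀⟩ := hfeasible x
  refine le_csInf ⟨_, u₀, hu₀, hEu₀, rfl⟩ ?_
  rintro _ ⟨u, hu, hEu, rfl⟩
  exact dualObj_le_of_mem_primalSet (dualFeas_of_posDef_or_const hK hres hfeas x)
    (bellmanCost_mem_primalSet hlb hu hEu)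

/-- Lemma 3, lower-bounding lemma: if `g₀,…,g_I` are global
lower bounds on the optimal value function `V*` (a fixed point of the Bellman
operator for the one-stage problem with stage cost of Restriction 1 and
dynamics of Restriction 2), and optimal dual variables exist for the one-stage
dual problem at parameter `x̂`, then the dual-objective function
`g_{I+1}(x) = φ(x)ᵀλ̂β* − h(x)ᵀλ̂c* + f_x(x)ᵀν̂* + ζ₁ + ζ₂(x)` satisfies
`g_{I+1}(x) ≤ V*(x)` for all `x`. -/
theorem stmt14 {n m nc Jn Ic K : ℕ} (hK : 0 < K) (hIc : 0 < Ic)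
    (Uset : Set (Fin m → ℝ))
    (fx : (Fin n → ℝ) → Fin n → ℝ) (Fu : (Fin n → ℝ) → Matrix (Fin n) (Fin m) ℝ)
    (E : Matrix (Fin nc) (Fin m) ℝ) (hb : (Fin n → ℝ) → Fin nc → ℝ)
    (φ : Fin Jn → (Fin n → ℝ) → ℝ) (r : Fin Jn → Fin m → ℝ)
    (R : Fin Jn → Matrix (Fin m) (Fin m) ℝ) (g : Fin Ic → (Fin n → ℝ) → ℝ)
    (γ : ℝ) (hγ0 : 0 < γ) (hγ1 : γ ≤ 1)
    (kof : Fin Jn → Fin K) (hkof : Function.Surjective kof)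
    (hres : (∀ j, (R j).PosDef) ∨ (∃ B, ∀ x, Fu x = B))
    (Vstar : (Fin n → ℝ) → ℝ)
    -- Bellman optimality condition `V* = T V*` for the problem whose stage
    -- cost is `ℓ(z,u) = Σ_k max_{j : kof j = k} {φ_j(z) + r_jᵀu + ½uᵀR_j u}`,
    -- dynamics `z₊ = f_x(z) + F_u(z)u`, and constraints `Eu ≤ h(z)`, `u ∈ U`:
    (hfix : ∀ z, Vstar z = sInf {c : ℝ | ∃ u ∈ Uset,
      (∀ cc, E.mulVec u cc ≤ hb z cc) ∧
      c = (∑ k, sSup {v : ℝ | ∃ j, kof j = k ∧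
            v = φ j z + r j ⬝ᵥ u + (1 / 2) * (u ⬝ᵥ (R j).mulVec u)}) +
          γ * Vstar (fx z + (Fu z).mulVec u)})
    -- the problem is feasible at every state:
    (hfeasible : ∀ z : Fin n → ℝ, ∃ u ∈ Uset, ∀ cc, E.mulVec u cc ≤ hb z cc)
    -- `g₀,…,g_I` are global lower bounds on `V*`:
    (hlb : ∀ i z, g i z ≤ Vstar z)
    (xhat ν : Fin n → ℝ) (lamc : Fin nc → ℝ) (lamb : Fin Jn → ℝ) (lama : Fin Ic → ℝ)
    -- optimal dual variables exist for the one-stage dual problem at `x̂`: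
    (hfeas : dualFeas Uset Fu E r R g γ kof xhat ν lamc lamb lama)
    (hopt : dualObj Uset fx Fu E hb φ r R g xhat ν lamc lamb lama ∈
      upperBounds {c : ℝ | ∃ ν' lamc' lamb' lama',
        dualFeas Uset Fu E r R g γ kof xhat ν' lamc' lamb' lama' ∧
        c = dualObj Uset fx Fu E hb φ r R g xhat ν' lamc' lamb' lama'}) :
    ∀ x : Fin n → ℝ, dualObj Uset fx Fu E hb φ r R g x ν lamc lamb lama ≤ Vstar x :=
  stmt14_general hK Uset fx Fu E hb φ r R g γ kof hres Vstar hfix hfeasible hlb xhat ν lamc lamb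
    lama hfeas
end
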